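/- For every t with 0 ≤ t < 1/6, the derivative of z₁ satisfies z₁′(t) = (a(t)·z₀(t))/(q(t)·c(t)) − (10·d(t)·z₁(t))/(3·q(t)·c(t)) − (6·a(t)·z₂(t)·z₁(t))/(q(t)·c(t)) − (2·y(t)·z₁(t))/q(t). -/

import Mathlib

noncomputable def pFun (t : ℝ) : ℝ := 1 - 6 * t

noncomputable def rFun (s t : ℝ) : ℝ := Real.exp (-(7776 / 25) * (1 - s) ^ 2 * t ^ 3)

noncomputable def qFun (t : ℝ) : ℝ := pFun t ^ 3 / 6

noncomputable def yFun (t : ℝ) : ℝ := pFun t ^ 2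

noncomputable def aFun (s t : ℝ) : ℝ := (5 / 6) * s * (1 - s) ^ 2 * pFun t ^ 5 * rFun s t ^ 2

noncomputable def c1Fun (s t : ℝ) : ℝ := (5 / 6) * s * (1 - s) * pFun t ^ 2 * rFun s t

noncomputable def c2Fun (s t : ℝ) : ℝ := (5 / 6) * (1 - s) ^ 2 * pFun t ^ 3 * rFun s t ^ 2

noncomputable def cFun (s t : ℝ) : ℝ := c1Fun s t * c2Fun s t

noncomputable def dFun (s t : ℝ) : ℝ := (5 / 6) * s * (1 - s) ^ 3 * pFun t ^ 7 * rFun s t ^ 3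

noncomputable def z0Fun (s t : ℝ) : ℝ := (5 / 6) * (1 - s) ^ 5 * pFun t ^ 9 * rFun s t ^ 3

noncomputable def z1Fun (s t : ℝ) : ℝ := (1 - s) ^ 4 * (1 - pFun t) * pFun t ^ 6 * rFun s t ^ 2

noncomputable def z2Fun (s t : ℝ) : ℝ :=
  (6 / 5) * (1 - s) ^ 3 * (1 - pFun t) ^ 2 * pFun t ^ 3 * rFun s t

/-!
Every trajectory function is a monomial in `p`, `1 - p = 6 t` and `r`, and since
`(log r)' = -(23328/25) (1 - s)² t² = -(648/25) (1 - s)² (1 - p)²`, the derivative of `z₁` is again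
such an expression. So is the right-hand side once the quotients are cancelled, which is legitimate
because `q c` is a nonzero multiple of `s (1 - s)³ p⁸ r³`; the two expressions then agree identically.
-/

section

variable (s t : ℝ)

lemma one_sub_pFun : 1 - pFun t = 6 * t := by
  unfold pFun; ring

lemma hasDerivAt_pFun : HasDerivAt pFun (-6) t :=
  (((hasDerivAt_id' (x := t)).const_mul 6).const_sub 1).congr_deriv (by ring)

lemma hasDerivAt_rFun :
    HasDerivAt (rFun s) (-(648 / 25) * (1 - s) ^ 2 * (1 - pFun t) ^ 2 * rFun s t) t := by
  have hexponent := ((hasDerivAt_pow 3 t).const_mul (-(7776 / 25) * (1 - s) ^ 2)).exp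
  refine hexponent.congr_deriv ?_
  rw [one_sub_pFun, rFun]
  ring

lemma hasDerivAt_z1Fun :
    HasDerivAt (z1Fun s)
      ((1 - s) ^ 4 * pFun t ^ 5 * rFun s t ^ 2 *
        (6 * pFun t - 36 * (1 - pFun t) - 1296 / 25 * (1 - s) ^ 2 * (1 - pFun t) ^ 3 * pFun t)) t := by
  have hp := hasDerivAt_pFun t
  have hz := ((((hp.const_sub 1).const_mul ((1 - s) ^ 4)).fun_mul (hp.fun_pow 6)).fun_mul
    ((hasDerivAt_rFun s t).fun_pow 2))
  refine hz.congr_deriv ?_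
  push_cast
  ring

lemma qFun_mul_cFun :
    qFun t * cFun s t = 25 / 216 * s * (1 - s) ^ 3 * pFun t ^ 8 * rFun s t ^ 3 := by
  unfold qFun cFun c1Fun c2Fun; ring

lemma z1_ode_rhs_eq (hs0 : s ≠ 0) (hs1 : 1 - s ≠ 0) (hp : pFun t ≠ 0) :
    (aFun s t * z0Fun s t) / (qFun t * cFun s t)
        - (10 * dFun s t * z1Fun s t) / (3 * qFun t * cFun s t)
        - (6 * aFun s t * z2Fun s t * z1Fun s t) / (qFun t * cFun s t)
        - (2 * yFun t * z1Fun s t) / qFun t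
      = (1 - s) ^ 4 * pFun t ^ 5 * rFun s t ^ 2 *
        (6 * pFun t - 36 * (1 - pFun t) - 1296 / 25 * (1 - s) ^ 2 * (1 - pFun t) ^ 3 * pFun t) := by
  have hr : rFun s t ≠ 0 := Real.exp_ne_zero _
  rw [mul_assoc 3, qFun_mul_cFun]
  unfold aFun z0Fun dFun z1Fun z2Fun yFun qFun
  field_simp
  ring

end

theorem z1_hasDerivAt_general (s : ℝ) (hs0 : 0 < s) (hs1 : s < 1) (t : ℝ)
    (ht : t < 1 / 6) :
    HasDerivAt (z1Fun s)
      ((aFun s t * z0Fun s t) / (qFun t * cFun s t)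
        - (10 * dFun s t * z1Fun s t) / (3 * qFun t * cFun s t)
        - (6 * aFun s t * z2Fun s t * z1Fun s t) / (qFun t * cFun s t)
        - (2 * yFun t * z1Fun s t) / qFun t) t := by
  have hp : pFun t ≠ 0 := by unfold pFun; linarith
  rw [z1_ode_rhs_eq s t hs0.ne' (sub_ne_zero.2 hs1.ne') hp]
  exact hasDerivAt_z1Fun s t

theorem z1_hasDerivAt (s : ℝ) (hs0 : 0 < s) (hs1 : s < 1) (t : ℝ)
    (ht0 : 0 ≤ t) (ht : t < 1 / 6) :
    HasDerivAt (z1Fun s)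
      ((aFun s t * z0Fun s t) / (qFun t * cFun s t)
        - (10 * dFun s t * z1Fun s t) / (3 * qFun t * cFun s t)
        - (6 * aFun s t * z2Fun s t * z1Fun s t) / (qFun t * cFun s t)
        - (2 * yFun t * z1Fun s t) / qFun t) t :=
  z1_hasDerivAt_general s hs0 hs1 t ht
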